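/- arXiv:0907.0571 — 2 statements merged into one kernel-verified Lean document; each statement's English description precedes it below -/
import Mathlib

section
/- Let v₁, …, v_m ∈ ℝⁿ. Define D(v₁,…,v_m) = min over i of the distance from v_i to the span of {v_j : j ≠ i}, and D̃(v₁,…,v_m) = min over unit vectors (y₁,…,y_m) ∈ ℝᵐ of |Σ_i y_i v_i|. Then D̃(v₁,…,v_m) ≤ D(v₁,…,v_m) ≤ √m · D̃(v₁,…,v_m). -/
noncomputable def Dfun {n m : ℕ} (v : Fin m → EuclideanSpace ℝ (Fin n)) : ℝ :=
  ⨅ i : Fin m, Metric.infDist (v i)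
    ((Submodule.span ℝ (v '' {j | j ≠ i}) : Submodule ℝ (EuclideanSpace ℝ (Fin n))) : Set (EuclideanSpace ℝ (Fin n)))

noncomputable def Dtil {n m : ℕ} (v : Fin m → EuclideanSpace ℝ (Fin n)) : ℝ :=
  ⨅ y : Metric.sphere (0 : EuclideanSpace ℝ (Fin m)) 1,
    ‖∑ i : Fin m, (y : EuclideanSpace ℝ (Fin m)) i • v i‖

open Metric Submodule Finset

lemma dtil_bdd {n m : ℕ} (v : Fin m → EuclideanSpace ℝ (Fin n)) :
    BddBelow (Set.range fun y : Metric.sphere (0 : EuclideanSpace ℝ (Fin m)) 1 =>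
      ‖∑ i : Fin m, (y : EuclideanSpace ℝ (Fin m)) i • v i‖) :=
  ⟨0, by rintro x ⟨y, rfl⟩; exact norm_nonneg _⟩

lemma dfun_bdd {n m : ℕ} (v : Fin m → EuclideanSpace ℝ (Fin n)) :
    BddBelow (Set.range fun i : Fin m => Metric.infDist (v i)
      ((Submodule.span ℝ (v '' {j | j ≠ i}) : Submodule ℝ (EuclideanSpace ℝ (Fin n))) : Set (EuclideanSpace ℝ (Fin n)))) :=
  ⟨0, by rintro x ⟨i, rfl⟩; exact Metric.infDist_nonneg⟩

lemma dtil_le {n m : ℕ} (v : Fin m → EuclideanSpace ℝ (Fin n))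
    (y : Metric.sphere (0 : EuclideanSpace ℝ (Fin m)) 1) :
    Dtil v ≤ ‖∑ i : Fin m, (y : EuclideanSpace ℝ (Fin m)) i • v i‖ :=
  ciInf_le (dtil_bdd v) y

theorem Dtil_D_comparison {n m : ℕ} (v : Fin m → EuclideanSpace ℝ (Fin n)) :
    Dtil v ≤ Dfun v ∧ Dfun v ≤ Real.sqrt m * Dtil v := by
  rcases Nat.eq_zero_or_pos m with hm | hm
  · subst hm
    haveI : IsEmpty (Metric.sphere (0 : EuclideanSpace ℝ (Fin 0)) 1) := by
      constructor
      rintro ⟨y, hy⟩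
      rw [mem_sphere_zero_iff_norm, Subsingleton.elim y 0, norm_zero] at hy
      norm_num at hy
    have h1 : Dtil v = 0 := Real.iInf_of_isEmpty _
    have h2 : Dfun v = 0 := Real.iInf_of_isEmpty _
    simp [h1, h2]
  haveI : Nonempty (Fin m) := ⟨⟨0, hm⟩⟩
  constructor
  · -- Dtil ≤ Dfun
    apply le_ciInf
    intro i
    rw [Metric.infDist_eq_iInf]
    haveI : Nonempty ((Submodule.span ℝ (v '' {j | j ≠ i}) : Submodule ℝ (EuclideanSpace ℝ (Fin n))) : Set (EuclideanSpace ℝ (Fin n))) :=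
      ⟨⟨0, Submodule.zero_mem _⟩⟩
    apply le_ciInf
    rintro ⟨w, hw⟩
    -- represent w
    rw [Set.image_eq_range] at hw
    obtain ⟨c, hc⟩ := (mem_span_range_iff_exists_fun ℝ).mp hw
    -- build y
    set y : EuclideanSpace ℝ (Fin m) := WithLp.toLp 2 (fun j => if h : j = i then 1 else -(c ⟨j, h⟩)) with hy
    have hsum : ∑ j : Fin m, y j • v j = v i - w := by
      rw [← Finset.add_sum_erase Finset.univ (fun j => y j • v j) (Finset.mem_univ i)]
      have h1 : y i • v i = v i := by simp [hy]
      have h2 : ∑ j ∈ Finset.univ.erase i, y j • v j = -w := by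
        have := Finset.sum_subtype (p := fun j : Fin m => j ∈ ({j | j ≠ i} : Set (Fin m)))
          (F := by infer_instance) (Finset.univ.erase i)
          (fun x => by simp [Finset.mem_erase, Set.mem_setOf_eq]) (fun j => y j • v j)
        rw [this]
        rw [← hc]
        rw [← Finset.sum_neg_distrib]
        apply Finset.sum_congr rfl
        rintro ⟨j, hj⟩ _
        have hj' : j ≠ i := hj
        simp [hy, dif_neg hj']
      rw [h1, h2]
      abel
    have hynorm : 1 ≤ ‖y‖ := by
      rw [EuclideanSpace.norm_eq]
      have : (1:ℝ) = Real.sqrt 1 := by simp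
      rw [this]
      apply Real.sqrt_le_sqrt
      have : ‖y i‖ ^ 2 ≤ ∑ j : Fin m, ‖y j‖ ^ 2 :=
        Finset.single_le_sum (f := fun j => ‖y j‖ ^ 2) (fun j _ => by positivity) (Finset.mem_univ i)
      simpa [hy] using this
    have hy0 : ‖y‖ ≠ 0 := by linarith
    set z : EuclideanSpace ℝ (Fin m) := ‖y‖⁻¹ • y with hz
    have hznorm : z ∈ Metric.sphere (0 : EuclideanSpace ℝ (Fin m)) 1 := by
      rw [mem_sphere_zero_iff_norm, hz, norm_smul, norm_inv, norm_norm, inv_mul_cancel₀ hy0]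
    have hzsum : ∑ j : Fin m, z j • v j = ‖y‖⁻¹ • (v i - w) := by
      rw [← hsum, Finset.smul_sum]
      apply Finset.sum_congr rfl
      intro j _
      rw [hz, PiLp.smul_apply, smul_eq_mul, smul_smul]
    calc Dtil v ≤ ‖∑ j : Fin m, z j • v j‖ := dtil_le v ⟨z, hznorm⟩
      _ = ‖y‖⁻¹ * ‖v i - w‖ := by rw [hzsum, norm_smul, norm_inv, norm_norm]
      _ ≤ 1 * ‖v i - w‖ := by
          apply mul_le_mul_of_nonneg_right _ (norm_nonneg _)
          rw [inv_le_one_iff₀]; right; exact hynorm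
      _ = dist (v i) w := by rw [one_mul, dist_eq_norm]
  · -- Dfun ≤ √m * Dtil
    -- minimizer on sphere
    have hcomp : IsCompact (Metric.sphere (0 : EuclideanSpace ℝ (Fin m)) 1) :=
      isCompact_sphere _ _
    have hne : (Metric.sphere (0 : EuclideanSpace ℝ (Fin m)) 1).Nonempty := by
      refine ⟨EuclideanSpace.single ⟨0, hm⟩ (1:ℝ), ?_⟩
      rw [mem_sphere_zero_iff_norm, EuclideanSpace.norm_single, norm_one]
    have hcont : Continuous fun y : EuclideanSpace ℝ (Fin m) => ‖∑ j : Fin m, y j • v j‖ := by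
      apply Continuous.norm
      apply continuous_finset_sum
      intro j _
      exact ((EuclideanSpace.proj j).continuous).smul continuous_const
    obtain ⟨y₀, hy₀mem, hy₀min⟩ := hcomp.exists_isMinOn hne hcont.continuousOn
    haveI : Nonempty (Metric.sphere (0 : EuclideanSpace ℝ (Fin m)) 1) := hne.to_subtype
    have hDtil_ge : ‖∑ j : Fin m, y₀ j • v j‖ ≤ Dtil v :=
      le_ciInf fun z => hy₀min z.2
    have hsumsq : ∑ j : Fin m, (y₀ j) ^ 2 = 1 := by
      have := mem_sphere_zero_iff_norm.mp hy₀mem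
      rw [EuclideanSpace.norm_eq] at this
      have h2 : ∑ j : Fin m, ‖y₀ j‖ ^ 2 = 1 := by
        have hnn : 0 ≤ ∑ j : Fin m, ‖y₀ j‖ ^ 2 := by positivity
        nlinarith [Real.sq_sqrt hnn]
      simpa [sq_abs] using h2
    obtain ⟨i, _, hi⟩ : ∃ i ∈ Finset.univ, (1:ℝ)/m ≤ (y₀ i)^2 := by
      apply Finset.exists_le_of_sum_le Finset.univ_nonempty
      rw [hsumsq]
      simp only [Finset.sum_const, Finset.card_univ, Fintype.card_fin, nsmul_eq_mul]
      rw [mul_one_div, div_self (Nat.cast_ne_zero.mpr hm.ne' : (m:ℝ) ≠ 0)]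
    set a := y₀ i with ha
    have hm' : (0:ℝ) < m := by exact_mod_cast hm
    have ha2 : (0:ℝ) < a^2 := lt_of_lt_of_le (by positivity) hi
    have ha0 : a ≠ 0 := fun h => by simp [h] at ha2
    have habs : (Real.sqrt m)⁻¹ ≤ |a| := by
      rw [← Real.sqrt_inv, ← Real.sqrt_sq_eq_abs]
      apply Real.sqrt_le_sqrt
      rw [← one_div]
      exact hi
    have hsqrtm : 0 < Real.sqrt m := Real.sqrt_pos.mpr hm'
    have hainv : |a|⁻¹ ≤ Real.sqrt m := by
      rw [← inv_inv (Real.sqrt m)]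
      exact inv_anti₀ (by positivity) habs
    set S := ∑ j : Fin m, y₀ j • v j with hS
    set w := v i - a⁻¹ • S with hw
    have hwmem : w ∈ (Submodule.span ℝ (v '' {j | j ≠ i}) : Submodule ℝ (EuclideanSpace ℝ (Fin n))) := by
      have hS' : S = a • v i + ∑ j ∈ Finset.univ.erase i, y₀ j • v j := by
        rw [hS, ← Finset.add_sum_erase Finset.univ (fun j => y₀ j • v j) (Finset.mem_univ i)]
      have : w = -(a⁻¹ • ∑ j ∈ Finset.univ.erase i, y₀ j • v j) := by
        rw [hw, hS', smul_add, smul_smul, inv_mul_cancel₀ ha0, one_smul]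
        abel
      rw [this]
      apply Submodule.neg_mem
      apply Submodule.smul_mem
      apply Submodule.sum_mem
      intro j hj
      apply Submodule.smul_mem
      exact Submodule.subset_span ⟨j, (Finset.mem_erase.mp hj).1, rfl⟩
    have h1 : Dfun v ≤ Metric.infDist (v i)
        ((Submodule.span ℝ (v '' {j | j ≠ i}) : Submodule ℝ (EuclideanSpace ℝ (Fin n))) : Set (EuclideanSpace ℝ (Fin n))) :=
      ciInf_le (dfun_bdd v) i
    have h2 : Metric.infDist (v i)
        ((Submodule.span ℝ (v '' {j | j ≠ i}) : Submodule ℝ (EuclideanSpace ℝ (Fin n))) : Set (EuclideanSpace ℝ (Fin n))) ≤ dist (v i) w :=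
      Metric.infDist_le_dist_of_mem hwmem
    have h3 : dist (v i) w = |a|⁻¹ * ‖S‖ := by
      rw [dist_eq_norm, hw, sub_sub_cancel, norm_smul, norm_inv, Real.norm_eq_abs]
    have h4 : |a|⁻¹ * ‖S‖ ≤ Real.sqrt m * ‖S‖ :=
      mul_le_mul_of_nonneg_right hainv (norm_nonneg _)
    have h5 : Real.sqrt m * ‖S‖ ≤ Real.sqrt m * Dtil v :=
      mul_le_mul_of_nonneg_left hDtil_ge (le_of_lt hsqrtm)
    linarith
end

section
/- For the map f : ℝ⁴ → ℝ² given by f(τ,λ,ξ,η) = (λξ + τη, τξ − λη), with x = (τ,λ,ξ,η) ∈ ℝ⁴ and y ∈ ℝ², one has the identity |f(x)|²|y|² + |(df)*(x)y|²|x|² = ((τ²+λ²)(ξ²+η²) + |x|⁴)|y|², and consequently |f(x)|²|y|² + |(df)*(x)y|²|x|² ≥ |x|⁴|y|² for all x ∈ ℝ⁴ and y ∈ ℝ². -/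
noncomputable def hopfMap (x : EuclideanSpace ℝ (Fin 4)) : EuclideanSpace ℝ (Fin 2) :=
  (WithLp.equiv 2 (Fin 2 → ℝ)).symm ![x 1 * x 2 + x 0 * x 3, x 0 * x 2 - x 1 * x 3]

noncomputable abbrev p4 (i : Fin 4) : EuclideanSpace ℝ (Fin 4) →L[ℝ] ℝ := EuclideanSpace.proj i

noncomputable def hopfDeriv (x : EuclideanSpace ℝ (Fin 4)) :
    EuclideanSpace ℝ (Fin 4) →L[ℝ] EuclideanSpace ℝ (Fin 2) :=
  (((EuclideanSpace.equiv (Fin 2) ℝ).symm : (Fin 2 → ℝ) ≃L[ℝ] EuclideanSpace ℝ (Fin 2)) :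
      (Fin 2 → ℝ) →L[ℝ] EuclideanSpace ℝ (Fin 2)).comp <|
    ContinuousLinearMap.pi ![
      x 1 • p4 2 + x 2 • p4 1 + (x 0 • p4 3 + x 3 • p4 0),
      x 0 • p4 2 + x 2 • p4 0 - (x 1 • p4 3 + x 3 • p4 1)]

lemma hopfDeriv_apply (x u : EuclideanSpace ℝ (Fin 4)) (i : Fin 2) :
    hopfDeriv x u i =
      ![x 1 * u 2 + x 2 * u 1 + (x 0 * u 3 + x 3 * u 0),
        x 0 * u 2 + x 2 * u 0 - (x 1 * u 3 + x 3 * u 1)] i := by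
  fin_cases i <;>
    simp [hopfDeriv, ContinuousLinearMap.proj_pi, EuclideanSpace.proj]

lemma hasFDerivAt_hopf (x : EuclideanSpace ℝ (Fin 4)) :
    HasFDerivAt hopfMap (hopfDeriv x) x := by
  have h : HasFDerivAt (fun x : EuclideanSpace ℝ (Fin 4) =>
      (![x 1 * x 2 + x 0 * x 3, x 0 * x 2 - x 1 * x 3] : Fin 2 → ℝ))
      (ContinuousLinearMap.pi ![
        x 1 • p4 2 + x 2 • p4 1 + (x 0 • p4 3 + x 3 • p4 0),
        x 0 • p4 2 + x 2 • p4 0 - (x 1 • p4 3 + x 3 • p4 1)]) x := by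
    rw [hasFDerivAt_pi']
    intro i
    fin_cases i
    · simpa [ContinuousLinearMap.proj_pi, Pi.mul_def, Pi.add_def, Pi.sub_def] using
        (((p4 1).hasFDerivAt.mul (p4 2).hasFDerivAt).add
          ((p4 0).hasFDerivAt.mul (p4 3).hasFDerivAt))
    · simpa [ContinuousLinearMap.proj_pi, Pi.mul_def, Pi.add_def, Pi.sub_def] using
        (((p4 0).hasFDerivAt.mul (p4 2).hasFDerivAt).sub
          ((p4 1).hasFDerivAt.mul (p4 3).hasFDerivAt))
  exact ((EuclideanSpace.equiv (Fin 2) ℝ).symm.comp_hasFDerivAt_iff.mpr h :)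

lemma adjoint_apply (x : EuclideanSpace ℝ (Fin 4)) (y : EuclideanSpace ℝ (Fin 2)) :
    (hopfDeriv x).adjoint y = (WithLp.equiv 2 (Fin 4 → ℝ)).symm
      ![y 0 * x 3 + y 1 * x 2, y 0 * x 2 - y 1 * x 3,
        y 0 * x 1 + y 1 * x 0, y 0 * x 0 - y 1 * x 1] := by
  apply ext_inner_right ℝ
  intro u
  rw [ContinuousLinearMap.adjoint_inner_left]
  simp only [PiLp.inner_apply, RCLike.inner_apply, conj_trivial, Fin.sum_univ_four,
    Fin.sum_univ_two, hopfDeriv_apply, WithLp.equiv_symm_apply, PiLp.toLp_apply]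
  simp [Fin.isValue]
  ring

lemma norm_sq_eq {n : ℕ} (v : EuclideanSpace ℝ (Fin n)) : ‖v‖ ^ 2 = ∑ i, v i ^ 2 := by
  rw [EuclideanSpace.norm_eq, Real.sq_sqrt (by positivity)]
  simp [sq_abs]

theorem hopf_regularity (x : EuclideanSpace ℝ (Fin 4)) (y : EuclideanSpace ℝ (Fin 2)) :
    ‖hopfMap x‖ ^ 2 * ‖y‖ ^ 2 + ‖(fderiv ℝ hopfMap x).adjoint y‖ ^ 2 * ‖x‖ ^ 2 =
        ((x 0 ^ 2 + x 1 ^ 2) * (x 2 ^ 2 + x 3 ^ 2) + ‖x‖ ^ 4) * ‖y‖ ^ 2 ∧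
      ‖x‖ ^ 4 * ‖y‖ ^ 2 ≤
        ‖hopfMap x‖ ^ 2 * ‖y‖ ^ 2 + ‖(fderiv ℝ hopfMap x).adjoint y‖ ^ 2 * ‖x‖ ^ 2 := by
  rw [(hasFDerivAt_hopf x).fderiv, adjoint_apply]
  have h4 : ‖x‖ ^ 4 = (‖x‖ ^ 2) ^ 2 := by ring
  have key : ‖hopfMap x‖ ^ 2 * ‖y‖ ^ 2 +
      ‖(WithLp.equiv 2 (Fin 4 → ℝ)).symm
        ![y 0 * x 3 + y 1 * x 2, y 0 * x 2 - y 1 * x 3,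
          y 0 * x 1 + y 1 * x 0, y 0 * x 0 - y 1 * x 1]‖ ^ 2 * ‖x‖ ^ 2 =
      ((x 0 ^ 2 + x 1 ^ 2) * (x 2 ^ 2 + x 3 ^ 2) + ‖x‖ ^ 4) * ‖y‖ ^ 2 := by
    rw [h4]
    simp only [norm_sq_eq, hopfMap, Fin.sum_univ_four, Fin.sum_univ_two,
      WithLp.equiv_symm_apply, PiLp.toLp_apply]
    simp [Fin.isValue]
    ring
  refine ⟨key, ?_⟩
  rw [key]
  nlinarith [sq_nonneg (x 0), sq_nonneg (x 1), sq_nonneg (x 2), sq_nonneg (x 3),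
    norm_nonneg y, sq_nonneg ‖y‖, mul_nonneg (mul_nonneg (add_nonneg (sq_nonneg (x 0)) (sq_nonneg (x 1))) (add_nonneg (sq_nonneg (x 2)) (sq_nonneg (x 3)))) (sq_nonneg ‖y‖)]
end
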